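/- Let X be a finite set with |X| = n, let m ≥ 1 be an integer, let ω = exp(2πi/m), and let B be the set of functions b : X → ZMod m whose support has size at most q. For a family of complex coefficients (β_b)_{b∈B}, define α(f) = Σ_{b∈B} β_b · ω^{Σ_{x∈X} (f(x)·b(x)).val} for each f : X → ZMod m. If there exists a function f : X → ZMod m with α(f) = 1, then Σ_{b∈B} |β_b|² ≥ 1 / (Σ_{i=0}^{q} C(n, i)·(m−1)^i). -/

import Mathlib

/-!
Since `‖ω‖ = 1`, the triangle inequality gives `1 = ‖α f‖ ≤ ∑ ‖β b‖`, and Cauchy–Schwarz bounds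
`(∑ ‖β b‖)²` by `#B · ∑ ‖β b‖²`. Finally `#B` is the size of a Hamming ball: there are `C(n, i)`
supports of size `i`, and `(m - 1) ^ i` functions with a given such support.
-/

open Finset

section SupportCount

variable {X M : Type*} [Fintype X] [DecidableEq X] [Fintype M] [DecidableEq M] [Zero M]

theorem card_filter_support_eq (s : Finset X) :
    #{b : X → M | ({x | b x ≠ 0} : Finset X) = s} = (Fintype.card M - 1) ^ #s := by
  have hpi : ({b : X → M | ({x | b x ≠ 0} : Finset X) = s} : Finset (X → M))
      = Fintype.piFinset fun x => if x ∈ s then univ.erase 0 else {0} := by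
    ext b
    simp only [mem_filter, mem_univ, true_and, Fintype.mem_piFinset, Finset.ext_iff]
    refine ⟨fun h x => ?_, fun h x => ?_⟩
    · by_cases hx : x ∈ s
      · simpa [hx] using (h x).2 hx
      · simpa [hx] using mt (h x).1 hx
    · by_cases hx : x ∈ s <;> simpa [hx] using h x
  rw [hpi, Fintype.card_piFinset]
  simp only [apply_ite Finset.card, card_erase_of_mem (mem_univ _), card_univ, card_singleton]
  rw [prod_ite_mem, univ_inter, prod_const]

theorem card_filter_card_support_eq (i : ℕ) :
    #{b : X → M | #{x | b x ≠ 0} = i} = (Fintype.card X).choose i * (Fintype.card M - 1) ^ i := by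
  rw [card_eq_sum_card_fiberwise (f := fun b : X → M => ({x | b x ≠ 0} : Finset X))
    (t := powersetCard i univ) (fun b hb => by simpa using hb)]
  have hfiber : ∀ s ∈ powersetCard i (univ : Finset X),
      #{b ∈ ({b : X → M | #{x | b x ≠ 0} = i} : Finset _) | ({x | b x ≠ 0} : Finset X) = s}
        = (Fintype.card M - 1) ^ i := by
    intro s hs
    rw [mem_powersetCard] at hs
    rw [filter_filter, ← hs.2, ← card_filter_support_eq s]
    congr 1
    ext b
    simp only [mem_filter, mem_univ, true_and, and_iff_right_iff_imp]
    rintro rfl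
    rfl
  rw [sum_congr rfl hfiber, sum_const, card_powersetCard, card_univ, smul_eq_mul]

theorem card_filter_card_support_le (q : ℕ) :
    #{b : X → M | #{x | b x ≠ 0} ≤ q}
      = ∑ i ∈ range (q + 1), (Fintype.card X).choose i * (Fintype.card M - 1) ^ i := by
  rw [card_eq_sum_card_fiberwise (f := fun b : X → M => #{x | b x ≠ 0})
    (t := range (q + 1)) (fun b hb => by simpa [Nat.lt_succ_iff] using hb)]
  refine sum_congr rfl fun i hi => ?_
  rw [filter_filter, ← card_filter_card_support_eq]
  congr 1
  ext b
  simp only [mem_filter, mem_univ, true_and, and_iff_right_iff_imp]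
  rintro rfl
  simpa [Nat.lt_succ_iff] using hi

end SupportCount

theorem norm_sum_mul_sq_le_card_mul_sum_norm_sq {ι R : Type*} [SeminormedRing R]
    (s : Finset ι) (β u : ι → R) (hu : ∀ i ∈ s, ‖u i‖ ≤ 1) :
    ‖∑ i ∈ s, β i * u i‖ ^ 2 ≤ #s * ∑ i ∈ s, ‖β i‖ ^ 2 := by
  have hnorm : ‖∑ i ∈ s, β i * u i‖ ≤ ∑ i ∈ s, ‖β i‖ :=
    (norm_sum_le _ _).trans <| sum_le_sum fun i hi =>
      (norm_mul_le _ _).trans <| mul_le_of_le_one_right (norm_nonneg _) (hu i hi)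
  exact (pow_le_pow_left₀ (norm_nonneg _) hnorm 2).trans sq_sum_le_card_mul_sum_sq

theorem stmt_4 (X : Type) [Fintype X] [DecidableEq X] (n m q : ℕ) [NeZero m]
    (hn : Fintype.card X = n)
    (ω : ℂ) (hω : ω = Complex.exp (2 * Real.pi * Complex.I / m))
    (B : Finset (X → ZMod m))
    (hB : B = Finset.univ.filter
      (fun b : X → ZMod m => (Finset.univ.filter fun x => b x ≠ 0).card ≤ q))
    (β : (X → ZMod m) → ℂ) (α : (X → ZMod m) → ℂ)
    (hα : ∀ f, α f = ∑ b ∈ B, β b * ω ^ (∑ x, (f x * b x).val))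
    (hf : ∃ f : X → ZMod m, α f = 1) :
    ∑ b ∈ B, ‖β b‖ ^ 2
      ≥ 1 / ∑ i ∈ Finset.range (q + 1), ((n.choose i * (m - 1) ^ i : ℕ) : ℝ) := by
  obtain ⟨f, hf⟩ := hf
  have hω_norm : ‖ω‖ = 1 :=
    hω ▸ (Complex.isPrimitiveRoot_exp m (NeZero.ne m)).norm'_eq_one (NeZero.ne m)
  have hkey : 1 ≤ #B * ∑ b ∈ B, ‖β b‖ ^ 2 := by
    simpa [← hα, hf] using norm_sum_mul_sq_le_card_mul_sum_norm_sq B β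
      (fun b => ω ^ (∑ x, (f x * b x).val)) fun b _ => by rw [norm_pow, hω_norm, one_pow]
  have hcard : #B = ∑ i ∈ range (q + 1), n.choose i * (m - 1) ^ i := by
    rw [hB, card_filter_card_support_le, ZMod.card, hn]
  have hB_pos : (0 : ℝ) < #B := Nat.cast_pos.2 (card_pos.2 ⟨0, by simp [hB]⟩)
  rw [← Nat.cast_sum, ← hcard, ge_iff_le, div_le_iff₀ hB_pos, mul_comm]
  exact hkey
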